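/- arXiv:2406.00797 — 8 statements merged into one kernel-verified Lean document; each statement's English description precedes it below -/
import Mathlib

section
/- Let p be an odd prime, n a positive integer, and a an element of ℤ_p (or ℚ_p) with p ∤ a. Then a is a p^n-th power in ℚ_p if and only if p^{n+1} divides a^{p-1} - 1. -/
/-!
A `p^n`-th root in `ℚ_p` of a `p`-adic unit is itself a `p`-adic unit. Necessity then follows
from Fermat's little theorem and `p ∣ b - 1 → p^(n+1) ∣ b^(p^n) - 1`. Conversely, for odd `p`
the `p`-th power map sends `1 + p^(k+1) ℤ_p` onto `1 + p^(k+2) ℤ_p`: Hensel's lemma applied at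
`1 + p^(k+1) u` produces a root, and lifting the exponent puts it in `1 + p^(k+1) ℤ_p`. Iterating,
`a^(p-1)` is a `p^n`-th power, hence so is `a`, as `p - 1` and `p^n` are coprime.
-/

theorem pow_three_dvd_one_add_mul_pow_sub {R : Type*} [CommRing R] {p : ℕ} (hp : Odd p) (s : R) :
    (p : R) ^ 3 ∣ (1 + p * s) ^ p - (1 + p ^ 2 * s) := by
  obtain ⟨w, hw⟩ := odd_sq_dvd_geom_sum₂_sub (1 : R) s hp
  have hgeom := geom_sum₂_mul (1 + p * s) (1 : R) p
  simp only [one_pow, mul_one] at hw hgeom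
  exact ⟨w * s, by linear_combination (p * s : R) * hw - hgeom⟩

theorem pow_succ_dvd_pow_prime_sub_pow_prime_iff {R : Type*} [CommRing R] [IsDomain R] {p : ℕ}
    (hp : Prime (p : R)) (hp1 : Odd p) {x y : R} (hxy : (p : R) ∣ x - y) (hx : ¬(p : R) ∣ x)
    (k : ℕ) : (p : R) ^ (k + 1) ∣ x ^ p - y ^ p ↔ (p : R) ^ k ∣ x - y := by
  rw [pow_dvd_iff_le_emultiplicity, pow_dvd_iff_le_emultiplicity,
    emultiplicity_pow_prime_sub_pow_prime hp hp1 hxy hx, Nat.cast_add, Nat.cast_one,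
    ENat.add_le_add_iff_right ENat.one_ne_top]

theorem exists_pow_eq_of_pow_eq_pow {M : Type*} [CommMonoid M] {a c : M} (hc : IsUnit c)
    {k m : ℕ} (hkm : k ∣ m - 1) (hm : m ≠ 0) (h : a ^ k = c ^ m) : ∃ r, r ^ m = a := by
  obtain ⟨f, hf⟩ := hkm
  have ham : a ^ m = a * (c ^ m) ^ f := by
    rw [← h, ← pow_mul, ← pow_succ', ← hf, Nat.sub_add_cancel (Nat.one_le_iff_ne_zero.2 hm)]
  refine ⟨a * (hc.unit⁻¹ : Mˣ) ^ f, ?_⟩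
  calc (a * (hc.unit⁻¹ : Mˣ) ^ f) ^ m = a ^ m * ((hc.unit⁻¹ : Mˣ) ^ m) ^ f := by
        rw [mul_pow, ← pow_mul, ← pow_mul, mul_comm f m]
    _ = a * ((c * (hc.unit⁻¹ : Mˣ)) ^ m) ^ f := by rw [ham, mul_pow c, mul_pow, mul_assoc]
    _ = a := by rw [hc.mul_val_inv, one_pow, one_pow, mul_one]

namespace PadicInt

variable {p : ℕ} [Fact p.Prime]

theorem isUnit_iff_not_p_dvd {z : ℤ_[p]} : IsUnit z ↔ ¬(p : ℤ_[p]) ∣ z := by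
  rw [isUnit_iff, ← norm_lt_one_iff_dvd, not_lt]
  exact ⟨fun h ↦ h.ge, (norm_le_one z).antisymm⟩

theorem p_dvd_iff_toZMod_eq_zero (z : ℤ_[p]) : (p : ℤ_[p]) ∣ z ↔ toZMod z = 0 := by
  rw [← RingHom.mem_ker, ker_toZMod, maximalIdeal_eq_span_p, Ideal.mem_span_singleton]

theorem p_dvd_pow_sub_one_sub_one {z : ℤ_[p]} (hz : ¬(p : ℤ_[p]) ∣ z) :
    (p : ℤ_[p]) ∣ z ^ (p - 1) - 1 := by
  rw [p_dvd_iff_toZMod_eq_zero] at hz ⊢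
  rw [map_sub, map_pow, map_one, ZMod.pow_card_sub_one_eq_one hz, sub_self]

theorem exists_pow_prime_eq_of_pow_three_dvd {x y : ℤ_[p]} (hy : IsUnit y)
    (h : (p : ℤ_[p]) ^ 3 ∣ y ^ p - x) : ∃ z : ℤ_[p], z ^ p = x ∧ (p : ℤ_[p]) ∣ z - y := by
  set F : Polynomial ℤ_[p] := .X ^ p - .C x
  have hp : (1 : ℝ) < p := mod_cast (Fact.out : p.Prime).one_lt
  have hF'y : ‖F.derivative.aeval y‖ = (p : ℝ)⁻¹ := by
    simp [F, Polynomial.derivative_X_pow, isUnit_iff.1 (hy.pow _)]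
  have hF : ‖F.aeval y‖ < ‖F.derivative.aeval y‖ ^ 2 :=
    calc ‖F.aeval y‖ ≤ (p : ℝ) ^ (-3 : ℤ) := by
          simpa [F] using (norm_le_pow_iff_mem_span_pow _ 3).2 (Ideal.mem_span_singleton.2 h)
      _ < (p : ℝ) ^ (-2 : ℤ) := zpow_lt_zpow_right₀ hp (by norm_num)
      _ = ‖F.derivative.aeval y‖ ^ 2 := by rw [hF'y]; norm_num
  obtain ⟨z, hz, hzy, -⟩ := hensels_lemma hF
  refine ⟨z, by simpa [F, sub_eq_zero] using hz, (norm_lt_one_iff_dvd _).1 ?_⟩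
  exact hzy.trans_le (hF'y.trans_le (inv_le_one_of_one_le₀ hp.le))

theorem exists_pow_prime_eq_of_pow_dvd_sub_one (hp : Odd p) {k : ℕ} {x : ℤ_[p]}
    (hx : (p : ℤ_[p]) ^ (k + 2) ∣ x - 1) :
    ∃ z : ℤ_[p], z ^ p = x ∧ (p : ℤ_[p]) ^ (k + 1) ∣ z - 1 := by
  obtain ⟨u, hu⟩ := hx
  set y : ℤ_[p] := 1 + p * (p ^ k * u)
  have hy1 : (p : ℤ_[p]) ∣ y - 1 := ⟨p ^ k * u, by ring⟩
  have hpy : ¬(p : ℤ_[p]) ∣ y := by rw [dvd_iff_dvd_of_dvd_sub hy1]; exact prime_p.not_dvd_one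
  -- the first-order approximation `y` to a `p`-th root of `x` is already correct modulo `p ^ 3`
  have hyx : (p : ℤ_[p]) ^ 3 ∣ y ^ p - x := by
    convert pow_three_dvd_one_add_mul_pow_sub hp (p ^ k * u : ℤ_[p]) using 2
    linear_combination hu
  obtain ⟨z, hzx, hzy⟩ := exists_pow_prime_eq_of_pow_three_dvd (isUnit_iff_not_p_dvd.2 hpy) hyx
  have hz1 : (p : ℤ_[p]) ∣ z - 1 := by simpa using dvd_add hzy hy1
  have hpz : ¬(p : ℤ_[p]) ∣ z := by rw [dvd_iff_dvd_of_dvd_sub hz1]; exact prime_p.not_dvd_one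
  refine ⟨z, hzx, (pow_succ_dvd_pow_prime_sub_pow_prime_iff prime_p hp hz1 hpz _).1 ?_⟩
  rw [hzx, one_pow, hu]
  exact dvd_mul_right _ _

theorem exists_pow_prime_pow_eq_of_pow_dvd_sub_one (hp : Odd p) (n : ℕ) {x : ℤ_[p]}
    (hx : (p : ℤ_[p]) ^ (n + 1) ∣ x - 1) : ∃ y : ℤ_[p], y ^ p ^ n = x := by
  induction n generalizing x with
  | zero => exact ⟨x, by rw [pow_zero, pow_one]⟩
  | succ n ih =>
    obtain ⟨z, rfl, hz⟩ := exists_pow_prime_eq_of_pow_dvd_sub_one hp hx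
    obtain ⟨y, rfl⟩ := ih hz
    exact ⟨y, by rw [pow_succ, pow_mul]⟩

theorem exists_pow_eq_coe_iff {m : ℕ} (hm : m ≠ 0) (a : ℤ_[p]) :
    (∃ r : ℚ_[p], r ^ m = a) ↔ ∃ s : ℤ_[p], s ^ m = a := by
  refine ⟨fun ⟨r, hr⟩ ↦ ?_, fun ⟨s, hs⟩ ↦ ⟨s, by rw [← coe_pow, hs]⟩⟩
  have hr1 : ‖r‖ ≤ 1 := by
    rw [← pow_le_one_iff_of_nonneg (norm_nonneg r) hm, ← norm_pow, hr]
    exact norm_le_one a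
  exact ⟨⟨r, hr1⟩, Subtype.ext hr⟩

end PadicInt

open PadicInt

theorem stmt_0_general (p : ℕ) [Fact p.Prime] (hp : Odd p) (n : ℕ)
    (a : ℤ_[p]) (ha : ¬ (p : ℤ_[p]) ∣ a) :
    (∃ r : ℚ_[p], r ^ p ^ n = (a : ℚ_[p])) ↔ (p : ℤ_[p]) ^ (n + 1) ∣ a ^ (p - 1) - 1 := by
  have hpn : p ^ n ≠ 0 := pow_ne_zero n (Fact.out : p.Prime).ne_zero
  rw [exists_pow_eq_coe_iff hpn]
  constructor
  · rintro ⟨s, rfl⟩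
    have hs : ¬(p : ℤ_[p]) ∣ s := fun h ↦ ha (h.trans (dvd_pow_self s hpn))
    simpa only [← pow_mul, mul_comm, one_pow] using
      dvd_sub_pow_of_dvd_sub (p_dvd_pow_sub_one_sub_one hs) n
  · intro h
    obtain ⟨c, hc⟩ := exists_pow_prime_pow_eq_of_pow_dvd_sub_one hp n h
    have hcu : IsUnit c := (isUnit_pow_iff hpn).1 (hc ▸ (isUnit_iff_not_p_dvd.2 ha).pow _)
    exact exists_pow_eq_of_pow_eq_pow hcu (Nat.sub_one_dvd_pow_sub_one p n) hpn hc.symm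

/-- Lemma 3.2 (I): for an odd prime `p`, a `p`-adic integer `a` not divisible by `p`,
and `n ≥ 1`, `a` is a `p^n`-th power in `ℚ_p` iff `p^(n+1) ∣ a^(p-1) - 1`. -/
theorem stmt_0 (p : ℕ) [Fact p.Prime] (hp : Odd p) (n : ℕ) (hn : 0 < n)
    (a : ℤ_[p]) (ha : ¬ (p : ℤ_[p]) ∣ a) :
    (∃ r : ℚ_[p], r ^ p ^ n = (a : ℚ_[p])) ↔ (p : ℤ_[p]) ^ (n + 1) ∣ a ^ (p - 1) - 1 :=
  stmt_0_general p hp n a ha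
end

section
/- Let k be a natural number ≥ 1, n = 2^k, and c an odd integer. If c is congruent to an n-th power modulo 2^{2k+1}, then c is an n-th power in ℚ_2. -/
/-!
Hensel's lemma applied to `X ^ p ^ k - c` at an integer unit `α`: the derivative there has
norm `‖p ^ k‖ = p ^ (-k)`, so agreement of `α ^ p ^ k` with `c` modulo `p ^ (2k+1)` is exactly
the strict inequality `‖F(α)‖ < ‖F'(α)‖ ^ 2` that Hensel's lemma needs.
-/

open Polynomial

namespace PadicInt

variable {p : ℕ} [Fact p.Prime]

theorem exists_pow_eq_of_norm_pow_sub_lt {n : ℕ} {a c : ℤ_[p]} (ha : ‖a‖ = 1)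
    (h : ‖a ^ n - c‖ < ‖(n : ℤ_[p])‖ ^ 2) : ∃ z : ℤ_[p], z ^ n = c := by
  have hderiv : ‖(X ^ n - C c).derivative.aeval a‖ = ‖(n : ℤ_[p])‖ := by
    simp [derivative_X_pow, ha]
  obtain ⟨z, hz, -⟩ := hensels_lemma (F := X ^ n - C c) (a := a) (by rw [hderiv]; simpa using h)
  exact ⟨z, by simpa [sub_eq_zero] using hz⟩

theorem exists_pow_prime_pow_eq_of_intModEq {k : ℕ} {α c : ℤ} (hα : IsCoprime α p)
    (h : α ^ p ^ k ≡ c [ZMOD p ^ (2 * k + 1)]) : ∃ z : ℤ_[p], z ^ p ^ k = c := by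
  have hnorm : ‖((α ^ p ^ k - c : ℤ) : ℤ_[p])‖ ≤ (p : ℝ) ^ (-(2 * k + 1 : ℕ) : ℤ) :=
    norm_int_le_pow_iff_dvd.mpr (Int.ModEq.dvd h.symm)
  refine exists_pow_eq_of_norm_pow_sub_lt (norm_intCast_eq_one_iff.mpr hα) ?_
  have hp : (1 : ℝ) < p := by exact_mod_cast (Fact.out : p.Prime).one_lt
  calc ‖(α : ℤ_[p]) ^ p ^ k - c‖ ≤ (p : ℝ) ^ (-(2 * k + 1 : ℕ) : ℤ) := by simpa using hnorm
    _ < (p : ℝ) ^ (-(2 * k : ℕ) : ℤ) := zpow_lt_zpow_right₀ hp (by omega)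
    _ = ‖((p ^ k : ℕ) : ℤ_[p])‖ ^ 2 := by
      rw [Nat.cast_pow, norm_p_pow, ← zpow_natCast, ← zpow_mul]
      push_cast
      ring_nf

end PadicInt

theorem stmt_1_general (k : ℕ) (c : ℤ)
    (h : ∃ α : ℤ, Odd α ∧ α ^ (2 ^ k) ≡ c [ZMOD (2 ^ (2 * k + 1) : ℤ)]) :
    ∃ x : ℚ_[2], x ^ (2 ^ k) = (c : ℚ_[2]) := by
  obtain ⟨α, hα, hmod⟩ := h
  obtain ⟨z, hz⟩ :=
    PadicInt.exists_pow_prime_pow_eq_of_intModEq (p := 2) (Int.isCoprime_two_right.mpr hα) hmod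
  exact ⟨z, by exact_mod_cast congrArg ((↑) : ℤ_[2] → ℚ_[2]) hz⟩

/-- Lemma 3.2 (II): if `n = 2^k` with `k ≥ 1` and `c` is an odd integer which is an
`n`-th power modulo `2^(2k+1)`, then `c` is an `n`-th power in `ℚ_2`. -/
theorem stmt_1 (k : ℕ) (hk : 1 ≤ k) (c : ℤ) (hc : Odd c)
    (h : ∃ α : ℤ, Odd α ∧ α ^ (2 ^ k) ≡ c [ZMOD (2 ^ (2 * k + 1) : ℤ)]) :
    ∃ x : ℚ_[2], x ^ (2 ^ k) = (c : ℚ_[2]) :=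
  stmt_1_general k c h
end

section
/- Let k ≥ 1, n = 2^k, and c be an odd integer with α^n ≡ c (mod 2^{2k+1}) for some odd integer α. Then for β = α + 2^{2k+1} and f(x) = x^n − c, the 2-adic absolute value satisfies |f(β)|_2 < |f'(β)|_2^2, so Hensel's lemma applies to produce a root of f in ℚ_2. -/
/-!
Since `β ≡ α (mod 2^(2k+1))`, the odd integer `β` satisfies `β^(2^k) ≡ c (mod 2^(2k+1))`, so
`|f(β)|₂ ≤ 2^-(2k+1)`, while `|f'(β)|₂ = |2^k|₂ · |β|₂^(2^k-1) = 2^-k`. Hence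
`|f(β)|₂ < 2^-2k = |f'(β)|₂²` and Hensel's lemma lifts `β` to a root of `x^(2^k) - c` in `ℤ_2`.
-/

open Polynomial

namespace PadicInt

variable {p : ℕ} [Fact p.Prime]

theorem exists_pow_eq_of_norm_lt {n : ℕ} {a c : ℤ_[p]}
    (h : ‖a ^ n - c‖ < ‖(n : ℤ_[p]) * a ^ (n - 1)‖ ^ 2) : ∃ z : ℤ_[p], z ^ n = c := by
  have hF : ‖(X ^ n - C c).aeval a‖ < ‖(derivative (X ^ n - C c)).aeval a‖ ^ 2 := by
    simpa [derivative_X_pow] using h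
  obtain ⟨z, hz, -⟩ := hensels_lemma hF
  exact ⟨z, sub_eq_zero.mp (by simpa using hz)⟩

theorem norm_pow_sub_lt_norm_deriv_sq {k : ℕ} {β c : ℤ} (hβ : IsCoprime β p)
    (hdvd : (p : ℤ) ^ (2 * k + 1) ∣ β ^ (p ^ k) - c) :
    ‖(β : ℤ_[p]) ^ (p ^ k) - c‖ < ‖((p ^ k : ℕ) : ℤ_[p]) * (β : ℤ_[p]) ^ (p ^ k - 1)‖ ^ 2 := by
  have hp : (1 : ℝ) < p := by exact_mod_cast (Fact.out : p.Prime).one_lt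
  have hβ1 : ‖(β : ℤ_[p])‖ = 1 := norm_intCast_eq_one_iff.mpr hβ
  calc ‖(β : ℤ_[p]) ^ (p ^ k) - c‖ = ‖((β ^ (p ^ k) - c : ℤ) : ℤ_[p])‖ := by push_cast; rfl
    _ ≤ (p : ℝ) ^ (-(2 * k + 1 : ℕ) : ℤ) := norm_int_le_pow_iff_dvd.mpr hdvd
    _ < (p : ℝ) ^ (-(2 * k : ℕ) : ℤ) := zpow_lt_zpow_right₀ hp (by omega)
    _ = ‖((p ^ k : ℕ) : ℤ_[p]) * (β : ℤ_[p]) ^ (p ^ k - 1)‖ ^ 2 := by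
      rw [norm_mul, norm_pow, hβ1, one_pow, mul_one, Nat.cast_pow, norm_p_pow, ← zpow_natCast,
        ← zpow_mul]
      push_cast
      ring_nf

end PadicInt

theorem stmt_2_general (k : ℕ) (c α : ℤ) (hα : Odd α)
    (h : α ^ (2 ^ k) ≡ c [ZMOD (2 ^ (2 * k + 1) : ℤ)]) :
    (‖((α + 2 ^ (2 * k + 1) : ℤ) : ℚ_[2]) ^ (2 ^ k) - (c : ℚ_[2])‖ <
      ‖((2 ^ k : ℕ) : ℚ_[2]) * ((α + 2 ^ (2 * k + 1) : ℤ) : ℚ_[2]) ^ (2 ^ k - 1)‖ ^ 2) ∧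
    ∃ x : ℚ_[2], x ^ (2 ^ k) = (c : ℚ_[2]) := by
  set β : ℤ := α + 2 ^ (2 * k + 1)
  have hβα : β ≡ α [ZMOD (2 ^ (2 * k + 1) : ℤ)] := Int.add_modEq_right
  have hβ : IsCoprime β 2 := Int.isCoprime_two_right.mpr (hα.add_even (by simp [Int.even_pow]))
  have hdvd : (2 : ℤ) ^ (2 * k + 1) ∣ β ^ (2 ^ k) - c := ((hβα.pow _).trans h).symm.dvd
  have hnorm := PadicInt.norm_pow_sub_lt_norm_deriv_sq (p := 2) hβ (by exact_mod_cast hdvd)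
  obtain ⟨z, hz⟩ := PadicInt.exists_pow_eq_of_norm_lt hnorm
  refine ⟨?_, z, ?_⟩
  · rw [PadicInt.norm_def, PadicInt.norm_def] at hnorm
    exact_mod_cast hnorm
  · rw [← PadicInt.coe_pow, hz, PadicInt.coe_intCast]

/-- The Hensel estimate in the proof of Lemma 3.2 (II): with `n = 2^k`, `c` odd,
`α` odd with `α^n ≡ c (mod 2^(2k+1))`, and `β = α + 2^(2k+1)`, the polynomial
`f(x) = x^n - c` satisfies `|f(β)|₂ < |f'(β)|₂²`, and `f` has a root in `ℚ_2`. -/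
theorem stmt_2 (k : ℕ) (hk : 1 ≤ k) (c α : ℤ) (hc : Odd c) (hα : Odd α)
    (h : α ^ (2 ^ k) ≡ c [ZMOD (2 ^ (2 * k + 1) : ℤ)]) :
    (‖((α + 2 ^ (2 * k + 1) : ℤ) : ℚ_[2]) ^ (2 ^ k) - (c : ℚ_[2])‖ <
      ‖((2 ^ k : ℕ) : ℚ_[2]) * ((α + 2 ^ (2 * k + 1) : ℤ) : ℚ_[2]) ^ (2 ^ k - 1)‖ ^ 2) ∧
    ∃ x : ℚ_[2], x ^ (2 ^ k) = (c : ℚ_[2]) :=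
  stmt_2_general k c α hα h
end

section
/- If t is an integer with t ≡ 1 (mod 2^{2k+1}) for a positive integer k, then t is a 2^k-th power in ℚ_2. -/
/-! Hensel's lemma for `f = X ^ (2 ^ k) - t` at `1`: the congruence gives
`|f(1)| ≤ 2^-(2k+1) < 2^-2k = |f'(1)|^2`, so `f` has a root in `ℤ_2`. -/

open Polynomial

namespace PadicInt

variable {p : ℕ} [Fact p.Prime]

theorem exists_pow_eq_of_norm_sub_one_lt {n : ℕ} {a : ℤ_[p]}
    (h : ‖a - 1‖ < ‖(n : ℤ_[p])‖ ^ 2) : ∃ z : ℤ_[p], z ^ n = a := by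
  have hnorm : ‖(X ^ n - C a).eval 1‖ < ‖(derivative (X ^ n - C a)).eval 1‖ ^ 2 := by
    simpa [norm_sub_rev, derivative_X_pow] using h
  obtain ⟨z, hz, -⟩ := hensels_lemma hnorm
  exact ⟨z, by simpa [sub_eq_zero] using hz⟩

theorem exists_pow_prime_pow_eq_of_int_modEq {m : ℕ} {t : ℤ}
    (ht : t ≡ 1 [ZMOD (p : ℤ) ^ (2 * m + 1)]) : ∃ z : ℤ_[p], z ^ p ^ m = t := by
  apply exists_pow_eq_of_norm_sub_one_lt
  have hdist : ‖((t - 1 : ℤ) : ℤ_[p])‖ ≤ (p : ℝ) ^ (-(2 * m + 1 : ℕ) : ℤ) :=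
    norm_int_le_pow_iff_dvd.2 ((Int.ModEq.dvd ht.symm).trans (by simp))
  have hp : (1 : ℝ) < p := by exact_mod_cast (Fact.out : p.Prime).one_lt
  calc ‖(t : ℤ_[p]) - 1‖ ≤ (p : ℝ) ^ (-(2 * m + 1 : ℕ) : ℤ) := by exact_mod_cast hdist
    _ < ((p : ℝ) ^ (-(m : ℤ))) ^ 2 := by
      rw [← zpow_natCast _ 2, ← zpow_mul]
      exact zpow_lt_zpow_right₀ hp (by push_cast; omega)
    _ = ‖((p ^ m : ℕ) : ℤ_[p])‖ ^ 2 := by rw [Nat.cast_pow, norm_p_pow]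

end PadicInt

theorem stmt_4_general (k : ℕ) (t : ℤ) (ht : t ≡ 1 [ZMOD (2 ^ (2 * k + 1) : ℤ)]) :
    ∃ x : ℚ_[2], x ^ 2 ^ k = (t : ℚ_[2]) := by
  obtain ⟨z, hz⟩ := PadicInt.exists_pow_prime_pow_eq_of_int_modEq (p := 2) (m := k)
    (by exact_mod_cast ht)
  exact ⟨z, by exact_mod_cast congrArg ((↑) : ℤ_[2] → ℚ_[2]) hz⟩

/-- If `t ≡ 1 (mod 2^(2k+1))` for a positive integer `k`, then `t` is a `2^k`-th power
in `ℚ_2`. -/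
theorem stmt_4 (k : ℕ) (hk : 0 < k) (t : ℤ) (ht : t ≡ 1 [ZMOD (2 ^ (2 * k + 1) : ℤ)]) :
    ∃ x : ℚ_[2], x ^ 2 ^ k = (t : ℚ_[2]) :=
  stmt_4_general k t ht
end

section
/- Let p be an odd prime not dividing an integer a. If a ≡ b^p (mod p²) for some integer b with p ∤ b, then x^p − a has a root in ℚ_p. -/
open Polynomial Finset

lemma aux_sum_split {R : Type*} [AddCommMonoid R] (p : ℕ) (hp1 : 1 ≤ p) (f : ℕ → R) :
    ∑ k ∈ Finset.range (p+1), f k = f 0 + f 1 + ∑ k ∈ Finset.Icc 2 p, f k := by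
  rw [Finset.range_eq_Ico,
    ← Finset.sum_Ico_consecutive f (Nat.zero_le 2) (by omega : 2 ≤ p + 1),
    ← Finset.Ico_add_one_right_eq_Icc 2 p]
  congr 1
  rw [← Finset.range_eq_Ico]
  rw [Finset.sum_range_succ, Finset.sum_range_one]

lemma aux_root (p : ℕ) [hpp : Fact p.Prime] (hp : Odd p) (c : ℤ_[p]) :
    ∃ z : ℤ_[p], (1 + (p:ℤ_[p])*z)^p = 1 + (p:ℤ_[p])^2*c := by
  have hp3 : 3 ≤ p := by
    rcases hpp.out.two_le.lt_or_eq with h | h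
    · omega
    · exfalso; rw [← h] at hp; exact (Nat.not_odd_iff_even.mpr even_two) hp
  set F : Polynomial ℤ_[p] :=
    X - C c + ∑ k ∈ Finset.Icc 2 p, C ((p.choose k : ℤ_[p]) * (p:ℤ_[p])^(k-2)) * X^k with hF
  have hevalF : ∀ t : ℤ_[p], F.eval t
      = t - c + ∑ k ∈ Finset.Icc 2 p, (p.choose k : ℤ_[p]) * (p:ℤ_[p])^(k-2) * t^k := by
    intro t; simp [hF, Polynomial.eval_finset_sum]
  have hderiv : F.derivative.eval c
      = 1 + ∑ k ∈ Finset.Icc 2 p,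
          (p.choose k : ℤ_[p]) * (p:ℤ_[p])^(k-2) * (k : ℤ_[p]) * c^(k-1) := by
    rw [hF]
    simp [Polynomial.derivative_sum, Polynomial.derivative_C_mul_X_pow,
      Polynomial.eval_finset_sum, Polynomial.derivative_pow, Polynomial.derivative_natCast,
      mul_assoc]
  have hdvd_coeff : ∀ k ∈ Finset.Icc 2 p,
      (p:ℤ_[p]) ∣ (p.choose k : ℤ_[p]) * (p:ℤ_[p])^(k-2) := by
    intro k hk
    rw [Finset.mem_Icc] at hk
    rcases eq_or_lt_of_le hk.1 with h2 | h3
    · have hd : p ∣ p.choose k := Nat.Prime.dvd_choose_self hpp.out (by omega) (by omega)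
      exact dvd_mul_of_dvd_left (by exact_mod_cast Nat.cast_dvd_cast hd) _
    · exact dvd_mul_of_dvd_right (dvd_pow_self _ (by omega)) _
  have hdvd_eval : (p:ℤ_[p]) ∣ F.eval c := by
    rw [hevalF c, sub_self, zero_add]
    exact Finset.dvd_sum fun k hk => dvd_mul_of_dvd_left (hdvd_coeff k hk) _
  have hdvd_deriv : (p:ℤ_[p]) ∣ F.derivative.eval c - 1 := by
    rw [hderiv, add_sub_cancel_left]
    exact Finset.dvd_sum fun k hk =>
      dvd_mul_of_dvd_left (dvd_mul_of_dvd_left (hdvd_coeff k hk) _) _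
  have hnorm_deriv : ‖F.derivative.eval c‖ = 1 := by
    set d := F.derivative.eval c with hd
    have h1 : ‖d - 1‖ < 1 := (PadicInt.norm_lt_one_iff_dvd _).mpr hdvd_deriv
    have key1 : (1:ℝ) ≤ max ‖d‖ ‖d - 1‖ := by
      have h2 := PadicInt.nonarchimedean d (-(d - 1))
      have e : d + -(d - 1) = 1 := by ring
      rw [e, norm_neg] at h2
      simpa using h2
    refine le_antisymm (PadicInt.norm_le_one _) ?_
    rcases le_max_iff.mp key1 with h | h
    · exact h
    · linarith
  have hnorm : ‖F.eval c‖ < ‖F.derivative.eval c‖ ^ 2 := by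
    rw [hnorm_deriv, one_pow]
    exact (PadicInt.norm_lt_one_iff_dvd _).mpr hdvd_eval
  obtain ⟨z, hz, -⟩ := hensels_lemma hnorm
  refine ⟨z, ?_⟩
  have hbin : (1 + (p:ℤ_[p])*z)^p
      = ∑ k ∈ Finset.range (p+1), ((p:ℤ_[p])*z)^k * 1^(p-k) * (p.choose k : ℤ_[p]) := by
    rw [add_comm (1:ℤ_[p]) _]
    exact add_pow _ 1 p
  have hsum : ∀ k ∈ Finset.Icc 2 p,
      ((p:ℤ_[p])*z)^k * 1^(p-k) * (p.choose k : ℤ_[p])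
        = (p:ℤ_[p])^2 * ((p.choose k : ℤ_[p]) * (p:ℤ_[p])^(k-2) * z^k) := by
    intro k hk
    rw [Finset.mem_Icc] at hk
    have hpk : (p:ℤ_[p])^2 * (p:ℤ_[p])^(k-2) = (p:ℤ_[p])^k := by
      rw [← pow_add]; congr 1; omega
    rw [one_pow, mul_one, mul_pow, ← mul_assoc, mul_comm ((p:ℤ_[p])^k)]
    rw [mul_assoc ((z:ℤ_[p])^k), ← hpk]
    ring
  have key : (1 + (p:ℤ_[p])*z)^p = 1 + (p:ℤ_[p])^2*c + (p:ℤ_[p])^2 * F.eval z := by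
    rw [hbin, aux_sum_split p (by omega), Finset.sum_congr rfl hsum, ← Finset.mul_sum, hevalF z]
    simp [Nat.choose_one_right]
    ring
  rw [key, show F.eval z = 0 by simpa using hz, mul_zero, add_zero]

/-- Hensel-type criterion: for an odd prime `p` and integers `a, b` with `p ∤ a`, `p ∤ b`
and `a ≡ b^p (mod p²)`, the polynomial `x^p − a` has a root in `ℚ_p`. -/
theorem stmt_7 (p : ℕ) [Fact p.Prime] (hp : Odd p) (a b : ℤ)
    (ha : ¬ (p : ℤ) ∣ a) (hb : ¬ (p : ℤ) ∣ b) (h : a ≡ b ^ p [ZMOD ((p : ℤ) ^ 2)]) :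
    ∃ x : ℚ_[p], x ^ p = (a : ℚ_[p]) := by
  have hbu : IsUnit (b : ℤ_[p]) := by
    rw [PadicInt.isUnit_iff]
    refine le_antisymm (PadicInt.norm_le_one _) (not_lt.mp fun hlt => ?_)
    exact hb ((PadicInt.norm_int_lt_one_iff_dvd b).mp hlt)
  set u : ℤ_[p]ˣ := hbu.unit with hu
  have hub : (u : ℤ_[p]) = (b : ℤ_[p]) := hbu.unit_spec
  obtain ⟨d, hd⟩ : ((p:ℤ))^2 ∣ b^p - a := (Int.ModEq.dvd h)
  -- a = b^p - p^2 d  in ℤ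
  set c : ℤ_[p] := (-d : ℤ) * ((u⁻¹ : ℤ_[p]ˣ) : ℤ_[p])^p with hc
  obtain ⟨z, hz⟩ := aux_root p hp c
  refine ⟨((b : ℤ_[p]) * (1 + (p:ℤ_[p])*z) : ℤ_[p]) , ?_⟩
  have hZ : ((b : ℤ_[p]) * (1 + (p:ℤ_[p])*z))^p = (a : ℤ_[p]) := by
    rw [mul_pow, hz, hc]
    have hbv : (b : ℤ_[p])^p * ((u⁻¹ : ℤ_[p]ˣ) : ℤ_[p])^p = 1 := by
      rw [← hub, ← mul_pow]
      simp
    have ha' : (a : ℤ_[p]) = (b : ℤ_[p])^p - (p:ℤ_[p])^2 * (d : ℤ_[p]) := by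
      have : (a : ℤ) = b^p - p^2*d := by linarith [hd]
      rw [this]; push_cast; ring
    rw [ha']
    calc (b : ℤ_[p])^p * (1 + (p:ℤ_[p])^2 * ((-d : ℤ) * ((u⁻¹ : ℤ_[p]ˣ) : ℤ_[p])^p))
        = (b : ℤ_[p])^p + (p:ℤ_[p])^2 * (-d : ℤ) * ((b : ℤ_[p])^p * ((u⁻¹ : ℤ_[p]ˣ) : ℤ_[p])^p) := by ring
      _ = (b : ℤ_[p])^p - (p:ℤ_[p])^2 * (d : ℤ_[p]) := by rw [hbv]; push_cast; ring
  calc ((((b : ℤ_[p]) * (1 + (p:ℤ_[p])*z)) : ℤ_[p]) : ℚ_[p])^p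
      = ((((b : ℤ_[p]) * (1 + (p:ℤ_[p])*z))^p : ℤ_[p]) : ℚ_[p]) := by push_cast; ring
    _ = (((a : ℤ_[p]) : ℚ_[p])) := by rw [hZ]
    _ = (a : ℚ_[p]) := by push_cast; ring
end

section
/- Let k be a field, m a natural number with char(k) ∤ m, a ∈ k, and let ω_m denote the number of m-th roots of unity contained in k. If a^{ω_m} = r^m for some r ∈ k, then the Galois group Gal(k(ζ_m, a^{1/m}) / k) is abelian. -/
open Polynomial

/-!
Let `ω = ω_m`. Every automorphism `σ` of a field extension `K / k` acts on the `m`-th roots of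
unity of `K` as `ξ ↦ ξ ^ s` for one integer `s`; since `σ` fixes the cyclic group of `m`-th roots
of unity of `k`, which has order `ω`, we get `ω ∣ s - 1`. For a root `α` of `x ^ m - a` the
quotient `u = σ α / α` is an `m`-th root of unity, and `σ (τ α) = τ (σ α)` amounts to
`u_τ ^ (s_σ - 1) = u_σ ^ (s_τ - 1)`. The hypothesis `a ^ ω = r ^ m` gives `α ^ ω = c r` with
`c ^ m = 1`, and applying `σ` yields `u_σ ^ ω = c ^ (s_σ - 1)`. Writing `s - 1 = ω e`, both sides
of the required identity become `c ^ (ω e_σ e_τ)`. As the roots generate the splitting field,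
any two automorphisms commute.
-/

theorem natCard_rootsOfUnity_eq_natCard_pow_eq_one (R : Type*) [CommRing R] [IsDomain R] (m : ℕ)
    [NeZero m] :
    Nat.card (rootsOfUnity m R) = Nat.card {x : R // x ^ m = 1} :=
  Nat.card_congr <| (rootsOfUnityEquivNthRoots R m).trans <|
    Equiv.subtypeEquivRight fun _ => mem_nthRoots (NeZero.pos m)

theorem RingEquiv.exists_zpow_eq_of_pow_eq_one {K : Type*} [Field K] {m : ℕ} [NeZero m]
    (σ : K ≃+* K) : ∃ s : ℤ, ∀ ξ : K, ξ ^ m = 1 → σ ξ = ξ ^ s := by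
  obtain ⟨s, hs⟩ := rootsOfUnity.integer_power_of_ringEquiv m σ
  exact ⟨s, fun ξ hξ => by simpa using hs (rootsOfUnity.mkOfPowEq ξ hξ)⟩

theorem Polynomial.pow_eq_of_mem_rootSet_X_pow_sub_C {k L : Type*} [Field k] [Field L]
    [Algebra k L] {m : ℕ} {a : k} {β : L} (hβ : β ∈ (X ^ m - C a).rootSet L) :
    m ≠ 0 ∧ β ^ m = algebraMap k L a := by
  obtain ⟨hp, hβ⟩ := mem_rootSet.mp hβ
  simp only [map_sub, map_pow, aeval_X, aeval_C, sub_eq_zero] at hβ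
  refine ⟨?_, hβ⟩
  rintro rfl
  have ha : a = 1 := (algebraMap k L).injective (by simpa using hβ.symm)
  simp [ha] at hp

namespace AlgEquiv

variable {k K : Type*} [Field k] [Field K] [Algebra k K] {m : ℕ}

theorem natCard_rootsOfUnity_dvd_sub_one [NeZero m] (σ : K ≃ₐ[k] K) {s : ℤ}
    (hs : ∀ ξ : K, ξ ^ m = 1 → σ ξ = ξ ^ s) :
    (Nat.card (rootsOfUnity m k) : ℤ) ∣ s - 1 := by
  obtain ⟨η, hη⟩ := IsCyclic.exists_ofOrder_eq_natCard (α := rootsOfUnity m k)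
  set x : Kˣ := Units.map (algebraMap k K).toMonoidHom (η : kˣ)
  have hxm : (x : K) ^ m = 1 := by
    simp [x, ← map_pow, (mem_rootsOfUnity' m (η : kˣ)).mp η.2]
  have hxs : x ^ s = x := Units.ext <| by
    rw [Units.val_zpow_eq_zpow_val, ← hs _ hxm]
    exact σ.commutes _
  have hord : orderOf x = Nat.card (rootsOfUnity m k) := by
    rw [orderOf_injective _ (Units.map_injective (algebraMap k K).injective), Subgroup.orderOf_coe,
      hη]
  rw [← hord, orderOf_dvd_iff_zpow_eq_one, zpow_sub_one, hxs, mul_inv_cancel]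

theorem apply_div_pow_eq_one (σ : K ≃ₐ[k] K) {a : k} {α : K} (hα : α ^ m = algebraMap k K a)
    (hα0 : α ≠ 0) : (σ α / α) ^ m = 1 := by
  rw [div_pow, ← map_pow, hα, σ.commutes, div_self (hα ▸ pow_ne_zero m hα0)]

theorem apply_div_pow_eq_zpow_sub_one (σ : K ≃ₐ[k] K) {s : ℤ}
    (hs : ∀ ξ : K, ξ ^ m = 1 → σ ξ = ξ ^ s) {ω : ℕ} {α c : K} {r : k} (hα0 : α ≠ 0)
    (hc : c ^ m = 1) (hαω : α ^ ω = c * algebraMap k K r) :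
    (σ α / α) ^ ω = c ^ (s - 1) := by
  have hcr : c * algebraMap k K r ≠ 0 := hαω ▸ pow_ne_zero ω hα0
  have hc0 : c ≠ 0 := left_ne_zero_of_mul hcr
  have hr0 : algebraMap k K r ≠ 0 := right_ne_zero_of_mul hcr
  rw [div_pow, ← map_pow, hαω, map_mul, hs c hc, σ.commutes, zpow_sub_one₀ hc0]
  field_simp

theorem apply_apply_comm_of_zpow_sub_one_eq (σ τ : K ≃ₐ[k] K) {s t : ℤ}
    (hs : ∀ ξ : K, ξ ^ m = 1 → σ ξ = ξ ^ s) (ht : ∀ ξ : K, ξ ^ m = 1 → τ ξ = ξ ^ t)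
    {a : k} {α : K} (hα : α ^ m = algebraMap k K a) (hα0 : α ≠ 0)
    (h : (τ α / α) ^ (s - 1) = (σ α / α) ^ (t - 1)) : σ (τ α) = τ (σ α) := by
  set u := σ α / α
  set v := τ α / α
  have hu0 : u ≠ 0 := div_ne_zero (by simpa using hα0) hα0
  have hv0 : v ≠ 0 := div_ne_zero (by simpa using hα0) hα0
  have hσα : σ α = u * α := (div_mul_cancel₀ _ hα0).symm
  have hτα : τ α = v * α := (div_mul_cancel₀ _ hα0).symm
  calc σ (τ α) = v ^ (s - 1) * v * u * α := by
        rw [hτα, map_mul, hs v (τ.apply_div_pow_eq_one hα hα0), hσα, zpow_sub_one₀ hv0]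
        field_simp
    _ = u ^ (t - 1) * u * v * α := by rw [h]; ring
    _ = τ (σ α) := by
        rw [hσα, map_mul, ht u (σ.apply_div_pow_eq_one hα hα0), hτα, zpow_sub_one₀ hu0]
        field_simp

theorem apply_apply_comm_of_pow_eq_algebraMap [NeZero m] (σ τ : K ≃ₐ[k] K) {a r : k}
    (hr : a ^ Nat.card (rootsOfUnity m k) = r ^ m) {α : K} (hα : α ^ m = algebraMap k K a) :
    σ (τ α) = τ (σ α) := by
  rcases eq_or_ne α 0 with rfl | hα0
  · simp
  set ω := Nat.card (rootsOfUnity m k)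
  obtain ⟨s, hs⟩ := σ.toRingEquiv.exists_zpow_eq_of_pow_eq_one (m := m)
  obtain ⟨t, ht⟩ := τ.toRingEquiv.exists_zpow_eq_of_pow_eq_one (m := m)
  obtain ⟨e, he⟩ := σ.natCard_rootsOfUnity_dvd_sub_one hs
  obtain ⟨f, hf⟩ := τ.natCard_rootsOfUnity_dvd_sub_one ht
  have hrm : algebraMap k K r ^ m ≠ 0 := by
    rw [← map_pow, ← hr, map_pow, ← hα, ← pow_mul]
    exact pow_ne_zero _ hα0
  set c := α ^ ω / algebraMap k K r
  have hc : c ^ m = 1 := by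
    rw [div_pow, ← pow_mul, mul_comm, pow_mul, hα, ← map_pow, hr, map_pow, div_self hrm]
  have hαω : α ^ ω = c * algebraMap k K r :=
    (div_mul_cancel₀ _ (ne_zero_pow (NeZero.ne m) hrm)).symm
  have hu := σ.apply_div_pow_eq_zpow_sub_one hs hα0 hc hαω
  have hv := τ.apply_div_pow_eq_zpow_sub_one ht hα0 hc hαω
  refine σ.apply_apply_comm_of_zpow_sub_one_eq τ hs ht hα hα0 ?_
  calc (τ α / α) ^ (s - 1) = ((τ α / α) ^ ω) ^ e := by rw [he, zpow_mul, zpow_natCast]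
    _ = c ^ (ω * f * e) := by rw [hv, hf, ← zpow_mul]
    _ = ((σ α / α) ^ ω) ^ f := by rw [hu, he, ← zpow_mul, mul_right_comm]
    _ = (σ α / α) ^ (t - 1) := by rw [hf, zpow_mul, zpow_natCast]

end AlgEquiv

theorem stmt_8_general (k : Type*) [Field k] (m : ℕ)
    (a : k) (h : ∃ r : k, a ^ (Nat.card {x : k // x ^ m = 1}) = r ^ m) :
    ∀ σ τ : ((X ^ m - C a).SplittingField ≃ₐ[k] (X ^ m - C a).SplittingField),
      σ * τ = τ * σ := by
  intro σ τ
  obtain ⟨r, hr⟩ := h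
  apply AlgEquiv.coe_toAlgHom_injective
  refine AlgHom.ext_of_adjoin_eq_top (SplittingField.adjoin_rootSet _) fun β hβ => ?_
  obtain ⟨hm, hβm⟩ := pow_eq_of_mem_rootSet_X_pow_sub_C hβ
  have : NeZero m := ⟨hm⟩
  rw [← natCard_rootsOfUnity_eq_natCard_pow_eq_one] at hr
  exact σ.apply_apply_comm_of_pow_eq_algebraMap τ hr hβm

/-- One direction of Schinzel's theorem: let `k` be a field, `m` a natural number not
divisible by `char k`, and `ω_m` the number of `m`-th roots of unity in `k`.  If
`a^(ω_m) = r^m` for some `r ∈ k`, then the Galois group of the splitting field of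
`x^m − a` over `k` (that is, of `k(ζ_m, a^{1/m})/k`) is abelian. -/
theorem stmt_8 (k : Type*) [Field k] (m : ℕ) (hm : 0 < m) (hchar : ¬ (ringChar k ∣ m))
    (a : k) (h : ∃ r : k, a ^ (Nat.card {x : k // x ^ m = 1}) = r ^ m) :
    ∀ σ τ : ((X ^ m - C a).SplittingField ≃ₐ[k] (X ^ m - C a).SplittingField),
      σ * τ = τ * σ :=
  stmt_8_general k m a h
end

section
/- Let h, m, n be positive integers with m ≥ 2 and let φ denote Euler's totient function. If h ≥ 12/(φ(n)·m) + 8/φ(n), then m·h·φ(n) ≥ 3 + (φ(n)·m·h)/2 + 2·√((φ(n)·m²·h)/2 + 1). -/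
/-!
With `x = φ(n)·m·h` the hypothesis says `x ≥ 12 + 8m`, and the claim is `x/2 - 3 ≥ 2√(mx/2 + 1)`.
Squaring, this becomes `x (x - 12 - 8m) + 20 ≥ 0`.
-/

lemma twelve_add_eight_mul_le_mul {t m h : ℝ} (ht : 0 < t) (hm : 0 < m)
    (H : 12 / (t * m) + 8 / t ≤ h) : 12 + 8 * m ≤ t * m * h := by
  have htm : 0 < t * m := mul_pos ht hm
  calc 12 + 8 * m = (12 / (t * m) + 8 / t) * (t * m) := by field_simp
    _ ≤ h * (t * m) := mul_le_mul_of_nonneg_right H htm.le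
    _ = t * m * h := by ring

lemma three_add_half_add_two_mul_sqrt_le {x m : ℝ} (hm : 0 ≤ m) (hx : 12 + 8 * m ≤ x) :
    3 + x / 2 + 2 * √(m * x / 2 + 1) ≤ x := by
  have hsqrt : √(m * x / 2 + 1) ≤ x / 4 - 3 / 2 := by
    rw [Real.sqrt_le_iff]
    constructor
    · linarith
    · nlinarith
  linarith

theorem stmt_10_general (h m n : ℕ) (hm : 2 ≤ m) (hn : 0 < n)
    (H : (h : ℝ) ≥ 12 / (Nat.totient n * m) + 8 / Nat.totient n) :
    (m : ℝ) * h * Nat.totient n ≥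
      3 + (Nat.totient n : ℝ) * m * h / 2 +
        2 * Real.sqrt ((Nat.totient n : ℝ) * m ^ 2 * h / 2 + 1) := by
  have ht : (0 : ℝ) < Nat.totient n := by exact_mod_cast Nat.totient_pos.mpr hn
  have hm' : (0 : ℝ) < m := by exact_mod_cast (by omega : 0 < m)
  have hx := twelve_add_eight_mul_le_mul ht hm' H
  have key := three_add_half_add_two_mul_sqrt_le hm'.le hx
  rw [show (Nat.totient n : ℝ) * m ^ 2 * h = m * (Nat.totient n * m * h) by ring]
  linarith

/-- The numerical inequality in the proof of Theorem 1.1: if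
`h ≥ 12/(φ(n)·m) + 8/φ(n)` then `m·h·φ(n) ≥ 3 + φ(n)·m·h/2 + 2·√(φ(n)·m²·h/2 + 1)`. -/
theorem stmt_10 (h m n : ℕ) (hh : 0 < h) (hm : 2 ≤ m) (hn : 0 < n)
    (H : (h : ℝ) ≥ 12 / (Nat.totient n * m) + 8 / Nat.totient n) :
    (m : ℝ) * h * Nat.totient n ≥
      3 + (Nat.totient n : ℝ) * m * h / 2 +
        2 * Real.sqrt ((Nat.totient n : ℝ) * m ^ 2 * h / 2 + 1) :=
  stmt_10_general h m n hm hn H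
end

section
/- Let p be an odd prime and a an integer with p ∤ a. Then a ∈ ℚ_p(ζ_{p^n})^{p^n} if and only if a ∈ ℚ_p^{p^n}: i.e., a is a p^n-th power in the local cyclotomic field ℚ_p(ζ_{p^n}) exactly when it is already a p^n-th power in ℚ_p. -/
/-!
The Galois group of `ℚ_p(ζ_{p^n}) / ℚ_p` embeds into `(ℤ/p^n)ˣ`, which is cyclic for odd `p`; let
`σ` generate it. Since `ℚ_p` contains no nontrivial `p`-th roots of unity for odd `p`, `σ` fixes no
nontrivial `p^n`-th root of unity, so `ξ ↦ σ ξ / ξ` is injective, hence bijective, on the finite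
set of `p^n`-th roots of unity. If `y ^ p^n = a`, then `σ y / y` is such a root of unity, so some
`η` with `η ^ p^n = 1` makes `y * η` fixed by `σ`, i.e. a `p^n`-th root of `a` lying in `ℚ_p`.
-/

namespace PadicInt

variable {p : ℕ} [hp : Fact p.Prime]

theorem p_dvd_sub_one_of_pow_eq_one {u : ℤ_[p]} (hu : u ^ p = 1) : (p : ℤ_[p]) ∣ u - 1 := by
  have h : toZMod u = 1 := by rw [← ZMod.pow_card (toZMod u), ← map_pow, hu, map_one]
  rw [← Ideal.mem_span_singleton, ← maximalIdeal_eq_span_p, ← ker_toZMod, RingHom.mem_ker,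
    map_sub, h, map_one, sub_self]

/- Write `u = 1 + p t`. If `u ≠ 1`, then `∑_{i < p} u ^ i = 0`, whereas for odd `p` this sum is
congruent to `p` modulo `p ^ 2`. -/
theorem eq_one_of_pow_eq_one (hodd : Odd p) {u : ℤ_[p]} (hu : u ^ p = 1) : u = 1 := by
  by_contra hne
  obtain ⟨t, ht⟩ := p_dvd_sub_one_of_pow_eq_one hu
  have hgeom : ∑ i ∈ Finset.range p, u ^ i = 0 := by
    have h := mul_neg_geom_sum u p
    rw [hu, sub_self] at h
    exact (mul_eq_zero.mp h).resolve_left (sub_ne_zero.mpr (Ne.symm hne))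
  have hsq := odd_sq_dvd_geom_sum₂_sub (R := ℤ_[p]) (a := 1) (b := t) hodd
  rw [← eq_add_of_sub_eq' ht] at hsq
  simp only [one_pow, mul_one, hgeom, zero_sub, dvd_neg, pow_two] at hsq
  have hp0 : (p : ℤ_[p]) ≠ 0 := Nat.cast_ne_zero.mpr hp.out.ne_zero
  exact p_nonunit (isUnit_of_dvd_one ((mul_dvd_mul_iff_left hp0).mp (by simpa using hsq)))

end PadicInt

namespace Padic

variable {p : ℕ} [hp : Fact p.Prime]

theorem eq_one_of_pow_eq_one (hodd : Odd p) {x : ℚ_[p]} (hx : x ^ p = 1) : x = 1 := by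
  have hnorm : ‖x‖ ≤ 1 := le_of_eq <|
    (pow_eq_one_iff_of_nonneg (norm_nonneg x) hp.out.ne_zero).mp (by rw [← norm_pow, hx, norm_one])
  obtain ⟨u, rfl⟩ : ∃ u : ℤ_[p], (u : ℚ_[p]) = x := ⟨⟨x, hnorm⟩, rfl⟩
  rw [PadicInt.eq_one_of_pow_eq_one hodd (PadicInt.ext hx), PadicInt.coe_one]

theorem eq_one_of_pow_prime_pow_eq_one (hodd : Odd p) (n : ℕ) {x : ℚ_[p]} (hx : x ^ p ^ n = 1) :
    x = 1 := by
  induction n generalizing x with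
  | zero => simpa using hx
  | succ n ih => exact eq_one_of_pow_eq_one hodd (ih (by rwa [← pow_mul, ← pow_succ']))

end Padic

theorem IsCyclotomicExtension.isCyclic_aut {N : ℕ} [NeZero N] (F K : Type*) [Field F] [Field K]
    [Algebra F K] [IsCyclotomicExtension {N} F K] [IsCyclic (ZMod N)ˣ] : IsCyclic (K ≃ₐ[F] K) :=
  isCyclic_of_injective _ ((zeta_spec N F K).autToPow_injective F)

section

variable {F K : Type*} [Field F] [Field K] [Algebra F K]

open Polynomial in
theorem AlgEquiv.exists_div_self_eq_of_pow_eq_one (σ : K ≃ₐ[F] K) {N : ℕ} (hN : 0 < N)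
    (hσ : ∀ ξ : K, ξ ^ N = 1 → σ ξ = ξ → ξ = 1) {ξ₀ : K} (hξ₀ : ξ₀ ^ N = 1) :
    ∃ η : K, η ^ N = 1 ∧ σ η / η = ξ₀ := by
  have hmem {ξ : K} : ξ ∈ nthRootsFinset N (1 : K) ↔ ξ ^ N = 1 := mem_nthRootsFinset hN 1
  have hne {ξ : K} (hξ : ξ ^ N = 1) : ξ ≠ 0 := (IsUnit.of_pow_eq_one hξ hN.ne').ne_zero
  obtain ⟨η, hη, hηξ⟩ := Finset.surjOn_of_injOn_of_card_le (fun ξ : K ↦ σ ξ / ξ)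
    (s := nthRootsFinset N (1 : K)) (t := nthRootsFinset N (1 : K))
    (fun ξ hξ ↦ by
      rw [Finset.mem_coe, hmem] at hξ ⊢
      rw [div_pow, ← map_pow, hξ, map_one, div_one])
    (fun ξ hξ ζ hζ h ↦ by
      rw [Finset.mem_coe, hmem] at hξ hζ
      have hfix : σ (ξ / ζ) = ξ / ζ := by
        rw [map_div₀, div_eq_div_iff ((map_ne_zero σ).mpr (hne hζ)) (hne hζ)]
        rw [div_eq_div_iff (hne hξ) (hne hζ)] at h
        linear_combination h
      exact (div_eq_one_iff_eq (hne hζ)).mp (hσ _ (by rw [div_pow, hξ, hζ, one_div_one]) hfix))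
    le_rfl (Finset.mem_coe.mpr (hmem.mpr hξ₀))
  exact ⟨η, hmem.mp hη, hηξ⟩

variable [FiniteDimensional F K] [IsGalois F K]

theorem IsGalois.mem_range_algebraMap_of_fixed_generator {σ₀ : K ≃ₐ[F] K}
    (hσ₀ : ∀ σ, σ ∈ Subgroup.zpowers σ₀) {z : K} (hz : σ₀ z = z) :
    z ∈ Set.range (algebraMap F K) :=
  (mem_range_algebraMap_iff_fixed z).mpr fun σ ↦ MulAction.mem_stabilizer_iff.mp
    (Subgroup.zpowers_le.mpr (MulAction.mem_stabilizer_iff.mpr hz) (hσ₀ σ))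

theorem IsGalois.exists_pow_eq_of_algebraMap_eq_pow [IsCyclic (K ≃ₐ[F] K)] {N : ℕ}
    (hF : ∀ x : F, x ^ N = 1 → x = 1) {a : F} {y : K} (hy : y ^ N = algebraMap F K a) :
    ∃ x : F, x ^ N = a := by
  have hN : 0 < N := Nat.pos_of_ne_zero fun h ↦ zero_ne_one (hF 0 (by rw [h, pow_zero]))
  rcases eq_or_ne a 0 with rfl | ha
  · exact ⟨0, zero_pow hN.ne'⟩
  have hy0 : y ≠ 0 := by
    rintro rfl
    rw [zero_pow hN.ne', eq_comm, FaithfulSMul.algebraMap_eq_zero_iff] at hy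
    exact ha hy
  have hne {ξ : K} (hξ : ξ ^ N = 1) : ξ ≠ 0 := (IsUnit.of_pow_eq_one hξ hN.ne').ne_zero
  obtain ⟨σ₀, hσ₀⟩ := IsCyclic.exists_generator (α := K ≃ₐ[F] K)
  have hfix : ∀ ξ : K, ξ ^ N = 1 → σ₀ ξ = ξ → ξ = 1 := by
    intro ξ hξ hσξ
    obtain ⟨x, rfl⟩ := mem_range_algebraMap_of_fixed_generator hσ₀ hσξ
    rw [hF x (FaithfulSMul.algebraMap_injective F K (by rwa [map_pow, map_one])), map_one]
  set ξ₀ := σ₀ y / y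
  have hξ₀ : ξ₀ ^ N = 1 := by
    rw [div_pow, ← map_pow, hy, AlgEquiv.commutes, ← hy, div_self (pow_ne_zero _ hy0)]
  obtain ⟨η, hη, hση⟩ :=
    σ₀.exists_div_self_eq_of_pow_eq_one hN hfix (ξ₀ := ξ₀⁻¹) (by rw [inv_pow, hξ₀, inv_one])
  have hσy : σ₀ y = y * ξ₀ := (mul_div_cancel₀ _ hy0).symm
  have hση' : σ₀ η = η * ξ₀⁻¹ := by rw [← hση, mul_div_cancel₀ _ (hne hη)]
  obtain ⟨x, hx⟩ := mem_range_algebraMap_of_fixed_generator hσ₀ (z := y * η) (by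
    rw [map_mul, hσy, hση', mul_mul_mul_comm, mul_inv_cancel₀ (hne hξ₀), mul_one])
  refine ⟨x, FaithfulSMul.algebraMap_injective F K ?_⟩
  rw [map_pow, hx, mul_pow, hη, mul_one, hy]

end

theorem stmt_16_general (p : ℕ) [hp : Fact p.Prime] (hodd : Odd p) (n : ℕ)
    (a : ℤ) :
    (∃ y : CyclotomicField (p ^ n) ℚ_[p],
        y ^ p ^ n = algebraMap ℚ_[p] _ (a : ℚ_[p])) ↔
      ∃ x : ℚ_[p], x ^ p ^ n = (a : ℚ_[p]) := by
  let K := CyclotomicField (p ^ n) ℚ_[p]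
  have := IsCyclotomicExtension.isGalois {p ^ n} ℚ_[p] K
  have := IsCyclotomicExtension.finiteDimensional {p ^ n} ℚ_[p] K
  have := ZMod.isCyclic_units_of_prime_pow p hp.out (hodd.ne_two_of_dvd_nat dvd_rfl) n
  have := IsCyclotomicExtension.isCyclic_aut (N := p ^ n) ℚ_[p] K
  refine ⟨fun ⟨y, hy⟩ ↦ ?_, fun ⟨x, hx⟩ ↦ ⟨algebraMap ℚ_[p] K x, by rw [← map_pow, hx]⟩⟩
  exact IsGalois.exists_pow_eq_of_algebraMap_eq_pow
    (fun _ ↦ Padic.eq_one_of_pow_prime_pow_eq_one hodd n) hy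

/-- Lemma 3.2 (I), first equivalence: for an odd prime `p` and an integer `a` with
`p ∤ a`, `a` is a `p^n`-th power in the local cyclotomic field `ℚ_p(ζ_{p^n})` iff it is
already a `p^n`-th power in `ℚ_p`. -/
theorem stmt_16 (p : ℕ) [hp : Fact p.Prime] (hodd : Odd p) (n : ℕ) (hn : 0 < n)
    (a : ℤ) (ha : ¬ (p : ℤ) ∣ a) :
    (∃ y : CyclotomicField (p ^ n) ℚ_[p],
        y ^ p ^ n = algebraMap ℚ_[p] _ (a : ℚ_[p])) ↔
      ∃ x : ℚ_[p], x ^ p ^ n = (a : ℚ_[p]) :=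
  stmt_16_general p (hp := hp) hodd n a
end
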